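/- arXiv:2312.11352 — 4 statements merged into one kernel-verified Lean document; each statement's English description precedes it below -/
import Mathlib

section
/- Let S = { x | Cx ≤ d } be a polytope in ℝⁿ with faces F₁,…,F_N, and let f be a piecewise affine vector field: f(x) = A_j x + b_j on polytopic regions R_j = { x | C_j x ≤ d_j }, j = 1,…,M, with S ⊆ ⋃_j R_j. Define D_{ij} = F_i ∩ R_j. If C_{i,*}·(A_j v + b_j) ≤ 0 for all i, j and all vertices v of D_{ij}, then for every point x on the boundary of S, the vector f(x) satisfies C_{i,*}·f(x) ≤ 0 for every face F_i containing x (the Nagumo tangent-cone condition at x). -/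
open Matrix

theorem vertex_invariance_condition_implies_nagumo
    {n N M p : ℕ}
    (C : Matrix (Fin N) (Fin n) ℝ) (d : Fin N → ℝ)
    (S : Set (Fin n → ℝ)) (hS : S = {x | ∀ i, (C *ᵥ x) i ≤ d i})
    (hScomp : IsCompact S)
    (A : Fin M → Matrix (Fin n) (Fin n) ℝ) (b : Fin M → (Fin n → ℝ))
    (Cr : Fin M → Matrix (Fin p) (Fin n) ℝ) (dr : Fin M → (Fin p → ℝ))
    (R : Fin M → Set (Fin n → ℝ)) (hR : ∀ j, R j = {x | ∀ k, (Cr j *ᵥ x) k ≤ dr j k})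
    (hcover : S ⊆ ⋃ j, R j)
    (f : (Fin n → ℝ) → (Fin n → ℝ))
    (hf : ∀ j, ∀ x ∈ R j, f x = A j *ᵥ x + b j)
    (F : Fin N → Set (Fin n → ℝ))
    (hF : ∀ i, F i = S ∩ {x | (C *ᵥ x) i = d i})
    (D : Fin N → Fin M → Set (Fin n → ℝ))
    (hD : ∀ i j, D i j = F i ∩ R j)
    (hvert : ∀ i j, ∀ v ∈ Set.extremePoints ℝ (D i j), C i ⬝ᵥ (A j *ᵥ v + b j) ≤ 0) :
    ∀ x ∈ frontier S, ∀ i : Fin N, (C *ᵥ x) i = d i → C i ⬝ᵥ f x ≤ 0 := by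
  -- basic facts about dot products
  have hcont : ∀ w : Fin n → ℝ, Continuous fun x : Fin n → ℝ => w ⬝ᵥ x := by
    intro w
    exact continuous_finset_sum _ fun k _ => continuous_const.mul (continuous_apply k)
  have hlin : ∀ w : Fin n → ℝ, IsLinearMap ℝ fun x : Fin n → ℝ => w ⬝ᵥ x := by
    intro w
    constructor
    · intro a c; simp [dotProduct_add]
    · intro a c; simp [dotProduct_smul]
  -- closedness / convexity of S
  have hSdef : S = ⋂ i, {x : Fin n → ℝ | C i ⬝ᵥ x ≤ d i} := by
    rw [hS]; ext x; simp [mulVec]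
  have hclosedS : IsClosed S := by
    rw [hSdef]
    exact isClosed_iInter fun i => isClosed_le (hcont (C i)) continuous_const
  have hconvS : Convex ℝ S := by
    rw [hSdef]
    exact convex_iInter fun i => convex_halfSpace_le (hlin (C i)) (d i)
  intro x hx i hxi
  have hxS : x ∈ S := by
    have := frontier_subset_closure hx
    rwa [hclosedS.closure_eq] at this
  obtain ⟨j, hxR⟩ := Set.mem_iUnion.mp (hcover hxS)
  -- properties of R j
  have hRdef : R j = ⋂ k, {x : Fin n → ℝ | Cr j k ⬝ᵥ x ≤ dr j k} := by
    rw [hR]; ext x; simp [mulVec]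
  have hclosedR : IsClosed (R j) := by
    rw [hRdef]
    exact isClosed_iInter fun k => isClosed_le (hcont (Cr j k)) continuous_const
  have hconvR : Convex ℝ (R j) := by
    rw [hRdef]
    exact convex_iInter fun k => convex_halfSpace_le (hlin (Cr j k)) (dr j k)
  -- properties of the hyperplane
  have hhyp : {y : Fin n → ℝ | (C *ᵥ y) i = d i} = {y : Fin n → ℝ | C i ⬝ᵥ y = d i} := by
    ext y; simp [mulVec]
  have hclosedH : IsClosed {y : Fin n → ℝ | (C *ᵥ y) i = d i} := by
    rw [hhyp]; exact isClosed_eq (hcont (C i)) continuous_const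
  have hconvH : Convex ℝ {y : Fin n → ℝ | (C *ᵥ y) i = d i} := by
    rw [hhyp]; exact convex_hyperplane (hlin (C i)) (d i)
  -- D i j
  have hDij : D i j = (S ∩ {y | (C *ᵥ y) i = d i}) ∩ R j := by
    rw [hD, hF]
  have hxD : x ∈ D i j := by
    rw [hDij]; exact ⟨⟨hxS, hxi⟩, hxR⟩
  have hDclosed : IsClosed (D i j) := by
    rw [hDij]; exact ((hclosedS.inter hclosedH).inter hclosedR)
  have hDsub : D i j ⊆ S := by
    rw [hDij]; intro y hy; exact hy.1.1
  have hDcomp : IsCompact (D i j) := hScomp.of_isClosed_subset hDclosed hDsub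
  have hDconv : Convex ℝ (D i j) := by
    rw [hDij]; exact (hconvS.inter hconvH).inter hconvR
  -- the affine function
  set w : Fin n → ℝ := C i ᵥ* A j with hw
  have hg : ∀ y : Fin n → ℝ, C i ⬝ᵥ (A j *ᵥ y + b j) = w ⬝ᵥ y + C i ⬝ᵥ b j := by
    intro y
    rw [dotProduct_add, dotProduct_mulVec]
  set T : Set (Fin n → ℝ) := {y | w ⬝ᵥ y + C i ⬝ᵥ b j ≤ 0} with hT
  have hTclosed : IsClosed T :=
    isClosed_le (((hcont w).add continuous_const)) continuous_const
  have hTconv : Convex ℝ T := by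
    have : T = {y : Fin n → ℝ | w ⬝ᵥ y ≤ -(C i ⬝ᵥ b j)} := by
      ext y; simp [hT]; constructor <;> intro h <;> linarith
    rw [this]
    exact convex_halfSpace_le (hlin w) _
  have hsub : Set.extremePoints ℝ (D i j) ⊆ T := by
    intro v hv
    have := hvert i j v hv
    rw [hg v] at this
    exact this
  have hxT : x ∈ T := by
    have hKM := closure_convexHull_extremePoints hDcomp hDconv
    have h1 : convexHull ℝ (Set.extremePoints ℝ (D i j)) ⊆ T := convexHull_min hsub hTconv
    have h2 : closure (convexHull ℝ (Set.extremePoints ℝ (D i j))) ⊆ T :=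
      closure_minimal h1 hTclosed
    rw [hKM] at h2
    exact h2 hxD
  rw [hf j x hxR, hg x]
  exact hxT
end

section
/- Conversely, if the polytopic set S is invariant for the continuous piecewise affine system ẋ = A_{Φ(x)} x + b_{Φ(x)} (so that f(x) lies in the tangent cone T_S(x) at every boundary point x), then C_{i,*}·(A_j v + b_j) ≤ 0 for every face index i, region index j, and vertex v of D_{ij} = F_i ∩ R_j. -/
open Matrix

theorem invariance_implies_vertex_condition
    {n N M p : ℕ}
    (C : Matrix (Fin N) (Fin n) ℝ) (d : Fin N → ℝ)
    (hCrow : ∀ i, C i ≠ 0)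
    (S : Set (Fin n → ℝ)) (hS : S = {x | ∀ i, (C *ᵥ x) i ≤ d i})
    (hScomp : IsCompact S)
    (A : Fin M → Matrix (Fin n) (Fin n) ℝ) (b : Fin M → (Fin n → ℝ))
    (Cr : Fin M → Matrix (Fin p) (Fin n) ℝ) (dr : Fin M → (Fin p → ℝ))
    (R : Fin M → Set (Fin n → ℝ)) (hR : ∀ j, R j = {x | ∀ k, (Cr j *ᵥ x) k ≤ dr j k})
    (hcover : S ⊆ ⋃ j, R j)
    (f : (Fin n → ℝ) → (Fin n → ℝ))
    (hf : ∀ j, ∀ x ∈ R j, f x = A j *ᵥ x + b j)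
    (F : Fin N → Set (Fin n → ℝ))
    (hF : ∀ i, F i = S ∩ {x | (C *ᵥ x) i = d i})
    (D : Fin N → Fin M → Set (Fin n → ℝ))
    (hD : ∀ i j, D i j = F i ∩ R j)
    (htangent : ∀ x ∈ frontier S, ∀ i : Fin N, (C *ᵥ x) i = d i → C i ⬝ᵥ f x ≤ 0) :
    ∀ i j, ∀ v ∈ Set.extremePoints ℝ (D i j), C i ⬝ᵥ (A j *ᵥ v + b j) ≤ 0 := by

  intro i j v hv
  have hvD : v ∈ D i j := hv.1
  rw [hD] at hvD
  obtain ⟨hvF, hvR⟩ := hvD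
  rw [hF] at hvF
  obtain ⟨hvS, hvEq⟩ := hvF
  have hfv : f v = A j *ᵥ v + b j := hf j v hvR
  have hclosed : IsClosed S := hScomp.isClosed
  have hfront : v ∈ frontier S := by
    rw [frontier, hclosed.closure_eq]
    refine ⟨hvS, fun hint => ?_⟩
    obtain ⟨ε, hε, hball⟩ := Metric.isOpen_iff.mp isOpen_interior v hint
    have hCnorm : (0:ℝ) < ‖C i‖ + 1 := by positivity
    set t : ℝ := ε / (2 * (‖C i‖ + 1)) with ht
    have htpos : 0 < t := by positivity
    have hw : v + t • C i ∈ S := by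
      apply interior_subset
      apply hball
      rw [Metric.mem_ball, dist_eq_norm]
      have h1 : v + t • C i - v = t • C i := by abel
      rw [h1, norm_smul, Real.norm_of_nonneg htpos.le]
      calc t * ‖C i‖ ≤ t * (‖C i‖ + 1) := by nlinarith [htpos]
        _ < ε := by
          have h2 : t * (‖C i‖ + 1) = ε / 2 := by
            rw [ht]; field_simp
          rw [h2]; linarith
    rw [hS] at hw
    have hle : (C *ᵥ (v + t • C i)) i ≤ d i := hw i
    have hdot : 0 < C i ⬝ᵥ C i := by
      rcases lt_or_eq_of_le (Finset.sum_nonneg fun k _ => mul_self_nonneg (C i k)) with h | h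
      · exact h
      · exact absurd (dotProduct_self_eq_zero.mp h.symm) (hCrow i)
    have hexp : (C *ᵥ (v + t • C i)) i = (C *ᵥ v) i + t * (C i ⬝ᵥ C i) := by
      simp [mulVec_add, Matrix.mulVec_smul, mulVec, smul_eq_mul]
    rw [hexp, hvEq] at hle
    nlinarith
  have := htangent v hfront i hvEq
  rwa [hfv] at this
end

section
/- Let O = { x | Cx < d } be an open convex polyhedral set and f(x) = A_j x + b_j a piecewise affine vector field on regions R_j covering the closed complement's boundary ∂O, with faces F_i of the closure of O. If C_{i,*}·(A_j v + b_j) ≥ 0 for all i, j and all vertices v of F_i ∩ R_j, then for every x ∈ ∂O and every active constraint i at x, C_{i,*}·f(x) ≥ 0. -/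
open Matrix

private lemma dp_lin {n : ℕ} (w : Fin n → ℝ) :
    IsLinearMap ℝ (fun x : Fin n → ℝ => w ⬝ᵥ x) :=
  ⟨fun x y => dotProduct_add w x y, fun a x => dotProduct_smul a w x⟩

private lemma dp_cont {n : ℕ} (w : Fin n → ℝ) :
    Continuous (fun x : Fin n → ℝ => w ⬝ᵥ x) := by
  simp only [dotProduct]
  exact continuous_finset_sum _ fun k _ => (continuous_const.mul (continuous_apply k))

theorem vertex_condition_for_unsafe_set_avoidance
    {n N M p : ℕ}
    (C : Matrix (Fin N) (Fin n) ℝ) (d : Fin N → ℝ)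
    (O : Set (Fin n → ℝ)) (hO : O = {x | ∀ i, (C *ᵥ x) i < d i})
    (Scl : Set (Fin n → ℝ)) (hScl : Scl = {x | ∀ i, (C *ᵥ x) i ≤ d i})
    (hclos : closure O = Scl) (hcomp : IsCompact Scl)
    (A : Fin M → Matrix (Fin n) (Fin n) ℝ) (b : Fin M → (Fin n → ℝ))
    (Cr : Fin M → Matrix (Fin p) (Fin n) ℝ) (dr : Fin M → (Fin p → ℝ))
    (R : Fin M → Set (Fin n → ℝ)) (hR : ∀ j, R j = {x | ∀ k, (Cr j *ᵥ x) k ≤ dr j k})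
    (hcover : frontier O ⊆ ⋃ j, R j)
    (f : (Fin n → ℝ) → (Fin n → ℝ))
    (hf : ∀ j, ∀ x ∈ R j, f x = A j *ᵥ x + b j)
    (F : Fin N → Set (Fin n → ℝ))
    (hF : ∀ i, F i = Scl ∩ {x | (C *ᵥ x) i = d i})
    (hvert : ∀ i j, ∀ v ∈ Set.extremePoints ℝ (F i ∩ R j),
        C i ⬝ᵥ (A j *ᵥ v + b j) ≥ 0) :
    ∀ x ∈ frontier O, ∀ i : Fin N, (C *ᵥ x) i = d i → C i ⬝ᵥ f x ≥ 0 := by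
  intro x hx i hi
  obtain ⟨_, ⟨j, rfl⟩, hxR⟩ := hcover hx
  have hxScl : x ∈ Scl := hclos ▸ frontier_subset_closure hx
  -- K is the face-region intersection
  set K : Set (Fin n → ℝ) := F i ∩ R j with hK
  have hxK : x ∈ K := ⟨(hF i) ▸ ⟨hxScl, hi⟩, hxR⟩
  -- K is closed
  have hSclclosed : IsClosed Scl := hclos ▸ isClosed_closure
  have hRclosed : IsClosed (R j) := by
    rw [hR j]
    have : {x : Fin n → ℝ | ∀ k, (Cr j *ᵥ x) k ≤ dr j k}
        = ⋂ k, {x | (Cr j *ᵥ x) k ≤ dr j k} := by ext y; simp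
    rw [this]
    exact isClosed_iInter fun k =>
      isClosed_le (dp_cont (Cr j k)) continuous_const
  have hKclosed : IsClosed K := by
    refine IsClosed.inter ?_ hRclosed
    rw [hF i]
    exact hSclclosed.inter (isClosed_eq (dp_cont (C i)) continuous_const)
  have hKcomp : IsCompact K :=
    hcomp.of_isClosed_subset hKclosed (fun y hy => ((hF i) ▸ hy.1).1)
  -- K is convex
  have hKconv : Convex ℝ K := by
    refine Convex.inter ?_ ?_
    · rw [hF i, hScl]
      refine Convex.inter ?_ (convex_hyperplane (dp_lin (C i)) (d i))
      have : {x : Fin n → ℝ | ∀ i', (C *ᵥ x) i' ≤ d i'}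
          = ⋂ i', {x | (C *ᵥ x) i' ≤ d i'} := by ext y; simp
      rw [this]
      exact convex_iInter fun i' => convex_halfSpace_le (dp_lin (C i')) (d i')
    · rw [hR j]
      have : {x : Fin n → ℝ | ∀ k, (Cr j *ᵥ x) k ≤ dr j k}
          = ⋂ k, {x | (Cr j *ᵥ x) k ≤ dr j k} := by ext y; simp
      rw [this]
      exact convex_iInter fun k => convex_halfSpace_le (dp_lin (Cr j k)) (dr j k)
  -- the affine functional is nonneg on K
  set S : Set (Fin n → ℝ) := {y | 0 ≤ C i ⬝ᵥ (A j *ᵥ y + b j)} with hS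
  have hrw : ∀ y : Fin n → ℝ,
      C i ⬝ᵥ (A j *ᵥ y + b j) = (C i ᵥ* A j) ⬝ᵥ y + C i ⬝ᵥ b j := by
    intro y
    rw [dotProduct_add, dotProduct_mulVec]
  have hSconv : Convex ℝ S := by
    have : S = {y | -(C i ⬝ᵥ b j) ≤ (C i ᵥ* A j) ⬝ᵥ y} := by
      ext y
      simp only [hS, Set.mem_setOf_eq, hrw y]
      constructor <;> intro h <;> linarith
    rw [this]
    exact convex_halfSpace_ge (dp_lin (C i ᵥ* A j)) _
  have hSclosed : IsClosed S := by
    have : S = {y | -(C i ⬝ᵥ b j) ≤ (C i ᵥ* A j) ⬝ᵥ y} := by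
      ext y
      simp only [hS, Set.mem_setOf_eq, hrw y]
      constructor <;> intro h <;> linarith
    rw [this]
    exact isClosed_le continuous_const (dp_cont _)
  have hsub : K ⊆ S := by
    have hKM := closure_convexHull_extremePoints hKcomp hKconv
    calc K = closure (convexHull ℝ (Set.extremePoints ℝ K)) := hKM.symm
    _ ⊆ S := closure_minimal (convexHull_min (fun v hv => hvert i j v hv) hSconv) hSclosed
  have := hsub hxK
  rw [hf j x hxR]
  exact this
end

section
/- For a linear system ẋ = Ax with solution x(t) = e^{At} x₀, if c·(A x) ≤ 0 for all x in a compact convex set S = { x | Cx ≤ d } whenever the constraint c·x = d_i is active, and this holds for all faces, then S is positively invariant: x₀ ∈ S implies x(t) ∈ S for all t ≥ 0. -/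
/-! Let `p` be the nearest point of the closed convex set `S` to `y s`. Checking the active
constraints shows that `A p` points into `S`, so `⟪y s - p, A p⟫ ≤ 0` by the variational
inequality of the projection, and hence `⟪y s - p, A (y s)⟫ ≤ ‖A‖ ‖y s - p‖²`. Since
`‖y · - p‖²` touches `infDist (y ·) S ²` from above at `s`, the squared distance has right Dini
derivative at most `2 ‖A‖` times itself; it vanishes at `0`, so by Grönwall it vanishes forever. -/

open Matrix Metric Set Filter Topology
open scoped NNReal RealInnerProductSpace

section ConvexInvariance

variable {E : Type*} [NormedAddCommGroup E] [InnerProductSpace ℝ E] {S : Set E}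

theorem exists_infDist_eq_norm_sub_and_inner_le (hne : S.Nonempty) (hc : IsComplete S)
    (hconv : Convex ℝ S) (u : E) :
    ∃ p ∈ S, infDist u S = ‖u - p‖ ∧ ∀ z ∈ S, ⟪u - p, z - p⟫ ≤ 0 := by
  obtain ⟨p, hp, hmin⟩ := exists_norm_eq_iInf_of_complete_convex hne hc hconv u
  refine ⟨p, hp, ?_, (norm_eq_iInf_iff_real_inner_le_zero hconv hp).1 hmin⟩
  simp only [hmin, infDist_eq_iInf, dist_eq_norm]

theorem inner_sub_apply_le_of_add_smul_mem {f : E → E} {K : ℝ≥0} (hf : LipschitzWith K f)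
    {u p : E} (hproj : ∀ z ∈ S, ⟪u - p, z - p⟫ ≤ 0) (htan : ∃ δ > (0 : ℝ), p + δ • f p ∈ S) :
    ⟪u - p, f u⟫ ≤ K * ‖u - p‖ ^ 2 := by
  obtain ⟨δ, hδ, hmem⟩ := htan
  have hfp : ⟪u - p, f p⟫ ≤ 0 := by
    have := hproj _ hmem
    rw [add_sub_cancel_left, real_inner_smul_right] at this
    exact nonpos_of_mul_nonpos_right this hδ
  have hlip : ‖f u - f p‖ ≤ K * ‖u - p‖ := hf.norm_sub_le u p
  calc ⟪u - p, f u⟫ = ⟪u - p, f p⟫ + ⟪u - p, f u - f p⟫ := by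
        rw [← inner_add_right, add_sub_cancel]
    _ ≤ 0 + ‖u - p‖ * (K * ‖u - p‖) :=
        add_le_add hfp ((real_inner_le_norm _ _).trans (by gcongr))
    _ = K * ‖u - p‖ ^ 2 := by ring

theorem frequently_slope_infDist_sq_lt [CompleteSpace E] (hne : S.Nonempty) (hSc : IsClosed S)
    (hconv : Convex ℝ S) {f : E → E} {K : ℝ≥0} (hf : LipschitzWith K f)
    (htan : ∀ p ∈ S, ∃ δ > (0 : ℝ), p + δ • f p ∈ S) {y : ℝ → E} {s r : ℝ}
    (hy : HasDerivWithinAt y (f (y s)) (Ici s) s) (hr : 2 * K * infDist (y s) S ^ 2 < r) :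
    ∃ᶠ z in 𝓝[>] s, (z - s)⁻¹ * (infDist (y z) S ^ 2 - infDist (y s) S ^ 2) < r := by
  obtain ⟨p, hp, hdist, hproj⟩ :=
    exists_infDist_eq_norm_sub_and_inner_le hne hSc.isComplete hconv (y s)
  have hderiv : HasDerivWithinAt (‖y · - p‖ ^ 2) (2 * ⟪y s - p, f (y s)⟫) (Ici s) s :=
    (hy.sub_const p).norm_sq
  have hbound : 2 * ⟪y s - p, f (y s)⟫ < r := by
    have := inner_sub_apply_le_of_add_smul_mem hf hproj (htan p hp)
    rw [← hdist] at this
    linarith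
  refine (hderiv.liminf_right_slope_le hbound).mp
    (eventually_mem_nhdsWithin.mono fun z hz h => ?_)
  have hle : infDist (y z) S ^ 2 ≤ ‖y z - p‖ ^ 2 := by
    rw [← dist_eq_norm]
    exact pow_le_pow_left₀ infDist_nonneg (infDist_le_dist_of_mem hp) 2
  refine lt_of_le_of_lt ?_ h
  rw [slope_def_field, div_eq_inv_mul, hdist]
  exact mul_le_mul_of_nonneg_left (by linarith) (inv_nonneg.2 (sub_nonneg.2 (le_of_lt hz)))

theorem mem_of_hasDerivWithinAt_of_forall_exists_add_smul_mem [CompleteSpace E]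
    (hSc : IsClosed S) (hconv : Convex ℝ S) {f : E → E} {K : ℝ≥0} (hf : LipschitzWith K f)
    (htan : ∀ p ∈ S, ∃ δ > (0 : ℝ), p + δ • f p ∈ S) {y : ℝ → E} {a b : ℝ}
    (hy : ContinuousOn y (Icc a b)) (hy' : ∀ t ∈ Ico a b, HasDerivWithinAt y (f (y t)) (Ici t) t)
    (ha : y a ∈ S) : ∀ t ∈ Icc a b, y t ∈ S := by
  have hne : S.Nonempty := ⟨y a, ha⟩
  have hgronwall := le_gronwallBound_of_liminf_deriv_right_le (δ := 0) (K := 2 * K) (ε := 0)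
    (f := fun t => infDist (y t) S ^ 2) (f' := fun t => 2 * K * infDist (y t) S ^ 2)
    (((continuous_infDist_pt S).comp_continuousOn hy).pow 2)
    (fun t ht r hr => frequently_slope_infDist_sq_lt hne hSc hconv hf htan (hy' t ht) hr)
    (by simp [infDist_zero_of_mem ha]) (fun _ _ => by simp)
  intro t ht
  have hsq : infDist (y t) S ^ 2 ≤ 0 := by simpa [gronwallBound_ε0_δ0] using hgronwall t ht
  exact (hSc.mem_iff_infDist_zero hne).2
    (pow_eq_zero_iff two_ne_zero |>.1 (le_antisymm hsq (sq_nonneg _)))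

end ConvexInvariance

section Polyhedron

variable {m n : Type*} [Fintype n] (C : Matrix m n ℝ) (d : m → ℝ)

theorem isClosed_setOf_mulVec_le : IsClosed {x : n → ℝ | ∀ i, (C *ᵥ x) i ≤ d i} := by
  simp only [ofPred_forall]
  exact isClosed_iInter fun i =>
    isClosed_le ((continuous_apply i).comp (continuous_const.matrix_mulVec continuous_id))
      continuous_const

theorem convex_setOf_mulVec_le : Convex ℝ {x : n → ℝ | ∀ i, (C *ᵥ x) i ≤ d i} := by
  intro x hx y hy a b ha hb hab i
  simp only [mulVec_add, mulVec_smul, Pi.add_apply, Pi.smul_apply, smul_eq_mul]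
  calc a * (C *ᵥ x) i + b * (C *ᵥ y) i ≤ a * d i + b * d i := by gcongr <;> simp_all
    _ = d i := by rw [← add_mul, hab, one_mul]

theorem exists_pos_add_smul_mem_setOf_mulVec_le [Finite m] {x v : n → ℝ}
    (hx : ∀ i, (C *ᵥ x) i ≤ d i) (hv : ∀ i, (C *ᵥ x) i = d i → C i ⬝ᵥ v ≤ 0) :
    ∃ δ > (0 : ℝ), ∀ i, (C *ᵥ (x + δ • v)) i ≤ d i := by
  have hline : ∀ i, ∀ᶠ δ in 𝓝[>] (0 : ℝ), (C *ᵥ x) i + δ * (C i ⬝ᵥ v) ≤ d i := by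
    intro i
    rcases (hx i).eq_or_lt with hactive | hslack
    · filter_upwards [self_mem_nhdsWithin] with δ hδ
      nlinarith [hv i hactive, mem_Ioi.1 hδ]
    · have hcont : Continuous fun δ : ℝ => (C *ᵥ x) i + δ * (C i ⬝ᵥ v) := by fun_prop
      have := (hcont.tendsto' 0 ((C *ᵥ x) i) (by simp)).mono_left
        (nhdsWithin_le_nhds (s := Ioi 0))
      exact this.eventually_le_const hslack
  obtain ⟨δ, hδ, hpos⟩ := ((eventually_all.2 hline).and self_mem_nhdsWithin).exists
  refine ⟨δ, hpos, fun i => ?_⟩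
  rw [mulVec_add, mulVec_smul]
  exact hδ i

end Polyhedron

theorem hasDerivAt_exp_smul_mulVec {m : Type*} [Fintype m] [DecidableEq m] (A : Matrix m m ℝ)
    (x₀ : m → ℝ) (t : ℝ) :
    HasDerivAt (fun s : ℝ => NormedSpace.exp (s • A) *ᵥ x₀)
      (A *ᵥ (NormedSpace.exp (t • A) *ᵥ x₀)) t := by
  let _ := Matrix.linftyOpNormedRing (n := m) (α := ℝ)
  let _ := Matrix.linftyOpNormedAlgebra (n := m) (R := ℝ) (α := ℝ)
  let applyAt : Matrix m m ℝ →L[ℝ] m → ℝ :=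
    ((LinearMap.applyₗ x₀).comp Matrix.toLin'.toLinearMap).toContinuousLinearMap
  rw [mulVec_mulVec]
  exact applyAt.hasFDerivAt.comp_hasDerivAt t (hasDerivAt_exp_smul_const' A t)

theorem nagumo_condition_implies_positive_invariance_linear_general
    {n N : ℕ} (A : Matrix (Fin n) (Fin n) ℝ)
    (C : Matrix (Fin N) (Fin n) ℝ) (d : Fin N → ℝ)
    (S : Set (Fin n → ℝ)) (hS : S = {x | ∀ i, (C *ᵥ x) i ≤ d i})
    (hnagumo : ∀ x ∈ S, ∀ i : Fin N, (C *ᵥ x) i = d i → C i ⬝ᵥ (A *ᵥ x) ≤ 0) :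
    ∀ x₀ ∈ S, ∀ t : ℝ, 0 ≤ t → (NormedSpace.exp (t • A)) *ᵥ x₀ ∈ S := by
  intro x₀ hx₀ t ht
  subst hS
  -- the projection argument needs an inner product, which the sup norm on `Fin n → ℝ` lacks
  let e := EuclideanSpace.equiv (Fin n) ℝ
  let L := toEuclideanCLM (n := Fin n) (𝕜 := ℝ) A
  have hy : ∀ s, HasDerivAt (fun s => e.symm (NormedSpace.exp (s • A) *ᵥ x₀))
      (L (e.symm (NormedSpace.exp (s • A) *ᵥ x₀))) s := fun s =>
    e.symm.hasFDerivAt.comp_hasDerivAt s (hasDerivAt_exp_smul_mulVec A x₀ s)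
  have htan : ∀ p ∈ e ⁻¹' {x | ∀ i, (C *ᵥ x) i ≤ d i},
      ∃ δ > (0 : ℝ), p + δ • L p ∈ e ⁻¹' {x | ∀ i, (C *ᵥ x) i ≤ d i} := fun p hp =>
    exists_pos_add_smul_mem_setOf_mulVec_le C d hp (hnagumo _ hp)
  exact mem_of_hasDerivWithinAt_of_forall_exists_add_smul_mem
    ((isClosed_setOf_mulVec_le C d).preimage e.continuous)
    ((convex_setOf_mulVec_le C d).linear_preimage e.toLinearMap) L.lipschitz htan
    (fun s _ => (hy s).continuousAt.continuousWithinAt) (fun s _ => (hy s).hasDerivWithinAt)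
    (by simpa using hx₀) t ⟨ht, le_rfl⟩

theorem nagumo_condition_implies_positive_invariance_linear
    {n N : ℕ} (A : Matrix (Fin n) (Fin n) ℝ)
    (C : Matrix (Fin N) (Fin n) ℝ) (d : Fin N → ℝ)
    (S : Set (Fin n → ℝ)) (hS : S = {x | ∀ i, (C *ᵥ x) i ≤ d i})
    (hcomp : IsCompact S) (hconv : Convex ℝ S)
    (hnagumo : ∀ x ∈ S, ∀ i : Fin N, (C *ᵥ x) i = d i → C i ⬝ᵥ (A *ᵥ x) ≤ 0) :
    ∀ x₀ ∈ S, ∀ t : ℝ, 0 ≤ t → (NormedSpace.exp (t • A)) *ᵥ x₀ ∈ S :=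
  nagumo_condition_implies_positive_invariance_linear_general A C d S hS hnagumo
end
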